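/- Let X be a set and let A be the abelian group of bounded functions from X to ℤ. (Nöbeling's theorem) The group A of all bounded functions X → ℤ is a free abelian group. -/

import Mathlib

def boundedIntFuncs (X : Type*) : AddSubgroup (X → ℤ) where
  carrier := {f | ∃ N : ℤ, ∀ x, |f x| ≤ N}
  add_mem' := by
    rintro f g ⟨N, hN⟩ ⟨M, hM⟩
    exact ⟨N + M, fun x => (abs_add_le _ _).trans (add_le_add (hN x) (hM x))⟩
  zero_mem' := ⟨0, fun x => by simp⟩
  neg_mem' := by
    rintro f ⟨N, hN⟩
    exact ⟨N, fun x => by simpa using hN x⟩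

section Aux
variable {X : Type*}

/-- Restriction along `pure` as a linear map. -/
noncomputable def restrictPure :
    LocallyConstant (Ultrafilter X) ℤ →ₗ[ℤ] (boundedIntFuncs X) where
  toFun f := ⟨fun x => f (pure x), by
    obtain ⟨N, hN⟩ := (f.range_finite.image (fun n => |n|)).bddAbove
    exact ⟨N, fun x => hN ⟨f (pure x), Set.mem_range_self _, rfl⟩⟩⟩
  map_add' f g := rfl
  map_smul' m f := rfl

theorem restrictPure_bij : Function.Bijective (restrictPure (X := X)) := by
  constructor
  · intro f g h
    ext U
    have h' : ∀ x, f (pure x) = g (pure x) := fun x => congrFun (congrArg Subtype.val h) x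
    exact congrFun (Continuous.ext_on denseRange_pure f.continuous g.continuous
      (fun x ⟨y, hy⟩ => by rw [← hy]; exact h' y)) U
  · rintro ⟨g, N, hN⟩
    -- g maps into the finite set Icc (-N) N
    have hmem : ∀ x, g x ∈ Set.Icc (-N) N := fun x => abs_le.mp (hN x)
    set g' : X → (Set.Icc (-N) N : Set ℤ) := fun x => ⟨g x, hmem x⟩ with hg'
    have : Finite (Set.Icc (-N) N : Set ℤ) := Set.finite_Icc _ _
    let F : Ultrafilter X → (Set.Icc (-N) N : Set ℤ) := Ultrafilter.extend g'
    have hFc : Continuous F := continuous_ultrafilter_extend g'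
    refine ⟨⟨fun U => (F U : ℤ), ?_⟩, ?_⟩
    · rw [IsLocallyConstant.iff_continuous]
      exact continuous_subtype_val.comp hFc
    · ext x
      show ((F (pure x) : ℤ)) = g x
      have := congrFun (ultrafilter_extend_extends g') x
      rw [show F (pure x) = g' x from this, hg']
end Aux

/-- Nöbeling's theorem: the group of all bounded functions `X → ℤ` is free abelian. -/
theorem stmt_4 (X : Type*) : Module.Free ℤ (boundedIntFuncs X) :=
  Module.Free.of_equiv' (LocallyConstant.freeOfProfinite (Profinite.of (Ultrafilter X)))
    (LinearEquiv.ofBijective restrictPure restrictPure_bij)
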